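/- For 2×2 Hermitian positive definite matrices A and B, A # B = (√(αβ)/√(det(α^{-1}A + β^{-1}B))) · (α^{-1}A + β^{-1}B), where α = √(det A) and β = √(det B). -/

import Mathlib

/-!
`A # B` is the unique positive semidefinite solution `C` of the Riccati equation `C A⁻¹ C = B`
(conjugating by `A^{-1/2}` turns it into `X² = A^{-1/2} B A^{-1/2}`). For `2 × 2` matrices, with
`M = α⁻¹A + β⁻¹B` and `t = tr(adj(A) B)`, one has `det M = 2 + t / (αβ)` and
`B adj(A) B = t B - β² A`, which combine to `M A⁻¹ M = (det M / (αβ)) B`. Hence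
`√(αβ / det M) • M` solves the Riccati equation.
-/

open Matrix ComplexOrder

namespace Matrix.PosSemidef

/-- The square root of a positive semidefinite matrix (Mathlib's former `Matrix.PosSemidef.sqrt`). -/
noncomputable def sqrt {n : Type*} [Fintype n] [DecidableEq n] {𝕜 : Type*} [RCLike 𝕜]
    {A : Matrix n n 𝕜} (hA : PosSemidef A) : Matrix n n 𝕜 :=
  hA.1.eigenvectorUnitary.1 * diagonal ((↑) ∘ Real.sqrt ∘ hA.1.eigenvalues) *
  (star hA.1.eigenvectorUnitary : Matrix n n 𝕜)

lemma posSemidef_sqrt {n : Type*} [Fintype n] [DecidableEq n] {𝕜 : Type*} [RCLike 𝕜]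
    {A : Matrix n n 𝕜} (hA : PosSemidef A) : PosSemidef hA.sqrt := by
  apply PosSemidef.mul_mul_conjTranspose_same
  refine posSemidef_diagonal_iff.mpr fun i ↦ ?_
  rw [Function.comp_apply, RCLike.nonneg_iff]
  constructor
  · simp only [RCLike.ofReal_re]
    exact Real.sqrt_nonneg _
  · simp only [RCLike.ofReal_im]

end Matrix.PosSemidef

lemma geomMean_aux {n : ℕ} {A B : Matrix (Fin n) (Fin n) ℂ} (hA : A.PosDef) (hB : B.PosDef) :
    ((hA.posSemidef.sqrt)⁻¹ * B * (hA.posSemidef.sqrt)⁻¹).PosSemidef := by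
  have h := hB.posSemidef.conjTranspose_mul_mul_same (hA.posSemidef.sqrt)⁻¹
  rwa [(hA.posSemidef.posSemidef_sqrt.isHermitian.inv).eq] at h

/-- The geometric mean `A # B = A^{1/2} (A^{-1/2} B A^{-1/2})^{1/2} A^{1/2}` of two
Hermitian positive definite matrices. -/
noncomputable def geomMean {n : ℕ} {A B : Matrix (Fin n) (Fin n) ℂ}
    (hA : A.PosDef) (hB : B.PosDef) : Matrix (Fin n) (Fin n) ℂ :=
  hA.posSemidef.sqrt * (geomMean_aux hA hB).sqrt * hA.posSemidef.sqrt

namespace Matrix.PosSemidef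

open scoped MatrixOrder

variable {n : Type*} [Fintype n] [DecidableEq n] {𝕜 : Type*} [RCLike 𝕜] {A : Matrix n n 𝕜}

theorem sqrt_eq_cfcSqrt (hA : PosSemidef A) : hA.sqrt = CFC.sqrt A := by
  rw [CFC.sqrt_eq_real_sqrt A hA.nonneg, cfcₙ_eq_cfc, hA.1.cfc_eq, IsHermitian.cfc,
    Unitary.conjStarAlgAut_apply]
  rfl

theorem sqrt_mul_self (hA : PosSemidef A) : hA.sqrt * hA.sqrt = A := by
  rw [sqrt_eq_cfcSqrt]
  exact CFC.sqrt_mul_sqrt_self A hA.nonneg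

theorem sqrt_unique {X : Matrix n n 𝕜} (hA : PosSemidef A) (hX : PosSemidef X) (h : X * X = A) :
    hA.sqrt = X := by
  rw [sqrt_eq_cfcSqrt]
  exact CFC.sqrt_unique h hX.nonneg

end Matrix.PosSemidef

theorem geomMean_eq_of_mul_inv_mul_eq {n : ℕ} {A B C : Matrix (Fin n) (Fin n) ℂ}
    (hA : A.PosDef) (hB : B.PosDef) (hC : C.PosSemidef) (h : C * A⁻¹ * C = B) :
    geomMean hA hB = C := by
  set S := hA.posSemidef.sqrt
  have hSS : S * S = A := hA.posSemidef.sqrt_mul_self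
  have hSdet : IsUnit S.det := by
    rw [← isUnit_iff_isUnit_det]
    exact isUnit_of_mul_isUnit_left (x := S) (y := S) (by rw [hSS]; exact hA.isUnit)
  have hSinv : (S⁻¹)ᴴ = S⁻¹ := hA.posSemidef.posSemidef_sqrt.isHermitian.inv.eq
  have hX : (S⁻¹ * C * S⁻¹).PosSemidef := by
    simpa only [hSinv] using hC.conjTranspose_mul_mul_same S⁻¹
  set X := S⁻¹ * C * S⁻¹
  have hXX : X * X = S⁻¹ * B * S⁻¹ := by
    calc X * X = S⁻¹ * (C * (S * S)⁻¹ * C) * S⁻¹ := by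
          simp only [X, Matrix.mul_inv_rev, Matrix.mul_assoc]
      _ = S⁻¹ * B * S⁻¹ := by rw [hSS, h]
  calc geomMean hA hB = S * X * S := by rw [geomMean, (geomMean_aux hA hB).sqrt_unique hX hXX]
    _ = S * S⁻¹ * C * (S⁻¹ * S) := by simp only [X, Matrix.mul_assoc]
    _ = C := by
      rw [mul_nonsing_inv S hSdet, nonsing_inv_mul S hSdet, Matrix.one_mul, Matrix.mul_one]

namespace Matrix

variable {R : Type*} [CommRing R] {K : Type*} [Field K]

theorem det_add_fin_two (X Y : Matrix (Fin 2) (Fin 2) R) :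
    (X + Y).det = X.det + Y.det + (adjugate X * Y).trace := by
  simp only [det_fin_two, adjugate_fin_two, trace_fin_two, add_apply, mul_apply, Fin.sum_univ_two,
    of_apply, cons_val', cons_val_zero, cons_val_one, cons_val_fin_one]
  ring

theorem mul_adjugate_mul_fin_two (X Y : Matrix (Fin 2) (Fin 2) R) :
    Y * adjugate X * Y = (adjugate X * Y).trace • Y - Y.det • X := by
  ext i j
  fin_cases i <;> fin_cases j <;>
    simp only [det_fin_two, adjugate_fin_two, trace_fin_two, sub_apply, smul_apply, smul_eq_mul,
      mul_apply, Fin.sum_univ_two, of_apply, cons_val', cons_val_zero, cons_val_one,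
      cons_val_fin_one, Fin.zero_eta, Fin.mk_one] <;> ring

theorem det_smul_add_smul_fin_two {A B : Matrix (Fin 2) (Fin 2) K} {a b : K} (ha : a ≠ 0)
    (hb : b ≠ 0) (hdA : A.det = a ^ 2) (hdB : B.det = b ^ 2) :
    (a⁻¹ • A + b⁻¹ • B).det = 2 + a⁻¹ * b⁻¹ * (adjugate A * B).trace := by
  rw [det_add_fin_two, det_smul, det_smul, adjugate_smul, hdA, hdB]
  simp only [Fintype.card_fin, Nat.reduceSub, pow_one, smul_mul_assoc, mul_smul_comm, trace_smul,
    smul_eq_mul]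
  field_simp
  ring

theorem smul_add_smul_mul_inv_mul_fin_two {A B : Matrix (Fin 2) (Fin 2) K} {a b : K} (ha : a ≠ 0)
    (hb : b ≠ 0) (hdA : A.det = a ^ 2) (hdB : B.det = b ^ 2) :
    (a⁻¹ • A + b⁻¹ • B) * A⁻¹ * (a⁻¹ • A + b⁻¹ • B) =
      (a⁻¹ * b⁻¹ * (a⁻¹ • A + b⁻¹ • B).det) • B := by
  have hinv : A⁻¹ = (a ^ 2)⁻¹ • adjugate A := by
    rw [inv_def, hdA, Ring.inverse_eq_inv']
  have hleft (X : Matrix (Fin 2) (Fin 2) K) : A * adjugate A * X = a ^ 2 • X := by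
    rw [mul_adjugate, hdA, smul_mul_assoc, Matrix.one_mul]
  have hright (X : Matrix (Fin 2) (Fin 2) K) : X * adjugate A * A = a ^ 2 • X := by
    rw [Matrix.mul_assoc, adjugate_mul, hdA, mul_smul_comm, Matrix.mul_one]
  rw [det_smul_add_smul_fin_two ha hb hdA hdB, hinv]
  simp only [add_mul, mul_add, smul_mul_assoc, mul_smul_comm, hleft, hright,
    mul_adjugate_mul_fin_two, hdB]
  match_scalars <;> field_simp <;> ring

end Matrix

/-- Explicit formula for the geometric mean of two `2 × 2` positive definite matrices:
`A # B = (√(αβ)/√(det(α⁻¹A + β⁻¹B))) (α⁻¹A + β⁻¹B)` with `α = √(det A)`, `β = √(det B)`. -/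
theorem geomMean_two_by_two {A B : Matrix (Fin 2) (Fin 2) ℂ}
    (hA : A.PosDef) (hB : B.PosDef)
    (α β γ : ℝ) (hα : 0 < α) (hβ : 0 < β) (hγ : 0 < γ)
    (hα2 : (α : ℂ) ^ 2 = A.det) (hβ2 : (β : ℂ) ^ 2 = B.det)
    (hγ2 : (γ : ℂ) ^ 2 = ((α : ℂ)⁻¹ • A + (β : ℂ)⁻¹ • B).det) :
    geomMean hA hB =
      ((Real.sqrt (α * β) / γ : ℝ) : ℂ) • ((α : ℂ)⁻¹ • A + (β : ℂ)⁻¹ • B) := by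
  have hM : ((α : ℂ)⁻¹ • A + (β : ℂ)⁻¹ • B).PosSemidef :=
    (hA.posSemidef.smul (by exact_mod_cast (inv_pos.mpr hα).le)).add
      (hB.posSemidef.smul (by exact_mod_cast (inv_pos.mpr hβ).le))
  have hc : ((Real.sqrt (α * β) / γ : ℝ) : ℂ) ^ 2 * ((α : ℂ)⁻¹ * (β : ℂ)⁻¹ * (γ : ℂ) ^ 2) = 1 := by
    norm_cast
    rw [div_pow, Real.sq_sqrt (by positivity)]
    field_simp
  refine geomMean_eq_of_mul_inv_mul_eq hA hB (hM.smul (by exact_mod_cast by positivity)) ?_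
  rw [smul_mul_assoc, smul_mul_assoc, mul_smul_comm, smul_smul,
    smul_add_smul_mul_inv_mul_fin_two (by exact_mod_cast hα.ne') (by exact_mod_cast hβ.ne')
      hα2.symm hβ2.symm, ← hγ2, smul_smul, ← sq, hc, one_smul]
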